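/- arXiv:0804.1677 — 2 statements merged into one kernel-verified Lean document; each statement's English description precedes it below -/
import Mathlib

section
/- Let 𝕜 be a field and l a simple Lie algebra over 𝕜 (i.e. l is nonabelian and has no Lie ideals other than {0} and l). Let h be a Lie subalgebra of the product Lie algebra l × l such that π₁(h) = l and π₂(h) = l. Then at least one of the following holds: (1) l × {0} ⊆ h; (2) {0} × l ⊆ h; (3) there exists a Lie algebra automorphism σ of l with h = {(X, σ(X)) : X ∈ l}. -/
/-- The product of two Lie rings, with componentwise bracket. -/
instance Prod.instLieRing {L M : Type*} [LieRing L] [LieRing M] : LieRing (L × M) where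
  bracket x y := (⁅x.1, y.1⁆, ⁅x.2, y.2⁆)
  add_lie x y z := by
    show (⁅(x + y).1, z.1⁆, ⁅(x + y).2, z.2⁆)
        = (⁅x.1, z.1⁆, ⁅x.2, z.2⁆) + (⁅y.1, z.1⁆, ⁅y.2, z.2⁆)
    simp [add_lie]
  lie_add x y z := by
    show (⁅x.1, (y + z).1⁆, ⁅x.2, (y + z).2⁆)
        = (⁅x.1, y.1⁆, ⁅x.2, y.2⁆) + (⁅x.1, z.1⁆, ⁅x.2, z.2⁆)
    simp [lie_add]
  lie_self x := by
    show (⁅x.1, x.1⁆, ⁅x.2, x.2⁆) = 0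
    simp
  leibniz_lie x y z := by
    show (⁅x.1, ⁅y.1, z.1⁆⁆, ⁅x.2, ⁅y.2, z.2⁆⁆)
        = (⁅⁅x.1, y.1⁆, z.1⁆, ⁅⁅x.2, y.2⁆, z.2⁆) + (⁅y.1, ⁅x.1, z.1⁆⁆, ⁅y.2, ⁅x.2, z.2⁆⁆)
    rw [Prod.mk_add_mk]
    exact congrArg₂ Prod.mk (leibniz_lie _ _ _) (leibniz_lie _ _ _)

@[simp] theorem Prod.bracket_def {L M : Type*} [LieRing L] [LieRing M] (x y : L × M) :
    ⁅x, y⁆ = (⁅x.1, y.1⁆, ⁅x.2, y.2⁆) := rfl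

/-- The product of two Lie algebras, with componentwise bracket. -/
instance Prod.instLieAlgebra {R L M : Type*} [CommRing R] [LieRing L] [LieRing M]
    [LieAlgebra R L] [LieAlgebra R M] : LieAlgebra R (L × M) where
  lie_smul t x y := by
    show (⁅x.1, (t • y).1⁆, ⁅x.2, (t • y).2⁆) = t • (⁅x.1, y.1⁆, ⁅x.2, y.2⁆)
    simp

/-!
The slices `{x | (x, 0) ∈ h}` and `{y | (0, y) ∈ h}` of a subalgebra `h ≤ l × l` are ideals as
soon as `h` projects onto the corresponding factor, since `⁅(x, y), (m, 0)⁆ = (⁅x, m⁆, 0)`.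
By simplicity each slice is `0` or `l`. If both are `0`, then `h` is the graph of a map, which is
a Lie homomorphism because `h` is a subalgebra, injective because the first slice is `0`, and
surjective because `h` projects onto the second factor.
-/

namespace LieSubalgebra

variable {R L M : Type*} [CommRing R] [LieRing L] [LieAlgebra R L] [LieRing M] [LieAlgebra R M]
  (h : LieSubalgebra R (L × M))

/-- The Lie analogue of `Submodule.goursatFst`. -/
def goursatFst (hfst : ∀ x : L, ∃ y : M, (x, y) ∈ h) : LieIdeal R L where
  carrier := {x | (x, 0) ∈ h}
  add_mem' ha hb := by simpa using h.add_mem ha hb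
  zero_mem' := h.zero_mem
  smul_mem' t _ ha := by simpa using h.smul_mem t ha
  lie_mem {x _} hm := by
    obtain ⟨y, hy⟩ := hfst x
    simpa using h.lie_mem hy hm

def goursatSnd (hsnd : ∀ y : M, ∃ x : L, (x, y) ∈ h) : LieIdeal R M where
  carrier := {y | (0, y) ∈ h}
  add_mem' ha hb := by simpa using h.add_mem ha hb
  zero_mem' := h.zero_mem
  smul_mem' t _ ha := by simpa using h.smul_mem t ha
  lie_mem {y _} hm := by
    obtain ⟨x, hx⟩ := hsnd y
    simpa using h.lie_mem hx hm

variable {h}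

@[simp]
theorem mem_goursatFst {hfst : ∀ x : L, ∃ y : M, (x, y) ∈ h} {x : L} :
    x ∈ h.goursatFst hfst ↔ (x, 0) ∈ h :=
  Iff.rfl

@[simp]
theorem mem_goursatSnd {hsnd : ∀ y : M, ∃ x : L, (x, y) ∈ h} {y : M} :
    y ∈ h.goursatSnd hsnd ↔ (0, y) ∈ h :=
  Iff.rfl

theorem goursatFst_eq_top_iff {hfst : ∀ x : L, ∃ y : M, (x, y) ∈ h} :
    h.goursatFst hfst = ⊤ ↔ ∀ x : L, (x, 0) ∈ h := by
  simp [LieSubmodule.ext_iff]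

theorem goursatSnd_eq_top_iff {hsnd : ∀ y : M, ∃ x : L, (x, y) ∈ h} :
    h.goursatSnd hsnd = ⊤ ↔ ∀ y : M, (0, y) ∈ h := by
  simp [LieSubmodule.ext_iff]

theorem snd_eq_of_mem_of_mem (hsnd₀ : ∀ y : M, (0, y) ∈ h → y = 0) {x : L} {y y' : M}
    (hy : (x, y) ∈ h) (hy' : (x, y') ∈ h) : y = y' :=
  sub_eq_zero.mp <| hsnd₀ _ <| by simpa using h.sub_mem hy hy'

theorem exists_lieHom_mem_iff (hfst : ∀ x : L, ∃ y : M, (x, y) ∈ h)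
    (hsnd₀ : ∀ y : M, (0, y) ∈ h → y = 0) :
    ∃ f : L →ₗ⁅R⁆ M, ∀ p : L × M, p ∈ h ↔ p.2 = f p.1 := by
  choose f hf using hfst
  have hf_unique {x : L} {y : M} (hy : (x, y) ∈ h) : y = f x :=
    snd_eq_of_mem_of_mem hsnd₀ hy (hf x)
  refine ⟨{ toFun := f
            map_add' := fun a b => (hf_unique (by simpa using h.add_mem (hf a) (hf b))).symm
            map_smul' := fun t a => (hf_unique (by simpa using h.smul_mem t (hf a))).symm
            map_lie' := fun {a b} => (hf_unique (by simpa using h.lie_mem (hf a) (hf b))).symm },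
    fun p => ⟨hf_unique, fun hp => ?_⟩⟩
  rw [show p = (p.1, f p.1) from Prod.ext rfl hp]
  exact hf p.1

theorem exists_lieEquiv_mem_iff (hfst : ∀ x : L, ∃ y : M, (x, y) ∈ h)
    (hsnd : ∀ y : M, ∃ x : L, (x, y) ∈ h) (hfst₀ : ∀ x : L, (x, 0) ∈ h → x = 0)
    (hsnd₀ : ∀ y : M, (0, y) ∈ h → y = 0) :
    ∃ e : L ≃ₗ⁅R⁆ M, ∀ p : L × M, p ∈ h ↔ p.2 = e p.1 := by
  obtain ⟨f, hf⟩ := exists_lieHom_mem_iff hfst hsnd₀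
  have hf_graph (x : L) : (x, f x) ∈ h := (hf (x, f x)).2 rfl
  have hf_injective : Function.Injective f := fun a b hab =>
    sub_eq_zero.mp <| hfst₀ _ <| by simpa [hab] using h.sub_mem (hf_graph a) (hf_graph b)
  have hf_surjective : Function.Surjective f := fun y =>
    (hsnd y).imp fun x hx => ((hf (x, y)).1 hx).symm
  exact ⟨LieEquiv.ofBijective f ⟨hf_injective, hf_surjective⟩, hf⟩

end LieSubalgebra

/-- If `l` is a simple Lie algebra and `h ⊆ l × l` is a Lie subalgebra
projecting onto `l` under both canonical projections, then `h` contains `l × {0}`, or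
`h` contains `{0} × l`, or `h` is the graph of a Lie algebra automorphism of `l`. -/
theorem lieSubalgebra_of_prod_simple_trichotomy
    (𝕜 : Type*) [Field 𝕜] (l : Type*) [LieRing l] [LieAlgebra 𝕜 l]
    [LieAlgebra.IsSimple 𝕜 l]
    (h : LieSubalgebra 𝕜 (l × l))
    (hπ₁ : ∀ x : l, ∃ y : l, ((x, y) : l × l) ∈ h)
    (hπ₂ : ∀ y : l, ∃ x : l, ((x, y) : l × l) ∈ h) :
    (∀ x : l, ((x, (0 : l)) : l × l) ∈ h) ∨
    (∀ y : l, (((0 : l), y) : l × l) ∈ h) ∨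
    (∃ σ : l ≃ₗ⁅𝕜⁆ l, ∀ p : l × l, p ∈ h ↔ p.2 = σ p.1) := by
  rcases LieAlgebra.IsSimple.eq_bot_or_eq_top (h.goursatFst hπ₁) with h₁ | h₁
  · rcases LieAlgebra.IsSimple.eq_bot_or_eq_top (h.goursatSnd hπ₂) with h₂ | h₂
    · rw [LieSubmodule.eq_bot_iff] at h₁ h₂
      exact Or.inr <| Or.inr <| LieSubalgebra.exists_lieEquiv_mem_iff hπ₁ hπ₂ h₁ h₂
    · exact Or.inr <| Or.inl <| LieSubalgebra.goursatSnd_eq_top_iff.1 h₂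
  · exact Or.inl <| LieSubalgebra.goursatFst_eq_top_iff.1 h₁
end

section
/- For column vectors x, y ∈ ℂ³, let F(x,y) = x ȳᵗ − y x̄ᵗ and F₀(x,y) = F(x,y) − (1/3)·tr(F(x,y))·I. Then for every nonzero x ∈ ℂ³ and every y ∈ ℂ³: F₀(x,y) = 0 if and only if there exists a real number α with y = α·x. In particular, if x and y are both nonzero and F₀(x,y) = 0, then x and y are linearly dependent over ℝ. -/
/-- `F(x,y) = x ȳᵗ − y x̄ᵗ`: the 3×3 complex matrix with `(i,j)` entry
`x i * conj (y j) − y i * conj (x j)`. -/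
noncomputable def F (x y : Fin 3 → ℂ) : Matrix (Fin 3) (Fin 3) ℂ :=
  Matrix.of fun i j => x i * star (y j) - y i * star (x j)

/-- `F₀(x,y) = F(x,y) − (1/3)·tr(F(x,y))·I`, the trace-free part of `F(x,y)`. -/
noncomputable def F₀ (x y : Fin 3 → ℂ) : Matrix (Fin 3) (Fin 3) ℂ :=
  F x y - ((1 / 3 : ℂ) * (F x y).trace) • (1 : Matrix (Fin 3) (Fin 3) ℂ)

/-!
`F₀(x,y) = 0` says that `F(x,y)` is a scalar matrix `c • 1`. Entrywise: `x a * ȳ b = y a * x̄ b`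
for `a ≠ b`, and all diagonal entries `x a * ȳ a - y a * x̄ a` are equal. If `x i ≠ 0` and
`α = y i / x i`, the off-diagonal relations of row `i` give `y k = ᾱ * x k` for `k ≠ i`; comparing
the diagonal entries at `i` and at some `j ≠ i` gives `(ᾱ - α) * (|x i|² + |x j|²) = 0`, so `α` is
real and `y = α • x`. Only two coordinates are involved, so this works in any dimension `≥ 2`.
-/

open Matrix

lemma F_eq_vecMulVec_sub (x y : Fin 3 → ℂ) :
    F x y = vecMulVec x (star y) - vecMulVec y (star x) := rfl

lemma eq_star_div_mul_of_mul_star_eq {a b u v : ℂ} (ha : a ≠ 0) (h : a * star v = b * star u) :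
    v = star (b / a) * u := by
  have hv : star v = b / a * star u := by
    rw [div_mul_eq_mul_div, eq_div_iff ha, mul_comm, h]
  simpa using congrArg star hv

lemma mul_star_sub_mul_star_of_eq_mul {u v β : ℂ} (hv : v = β * u) :
    u * star v - v * star u = (star β - β) * Complex.normSq u := by
  rw [hv, star_mul', ← Complex.mul_conj]
  simp only [Complex.star_def]
  ring

section

variable {ι : Type*}

lemma vecMulVec_star_sub_eq_zero_of_eq_real_smul {x y : ι → ℂ} {α : ℝ} (hy : y = (α : ℂ) • x) :
    vecMulVec x (star y) - vecMulVec y (star x) = 0 := by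
  rw [hy, star_smul, Complex.star_def, Complex.conj_ofReal, vecMulVec_smul, smul_vecMulVec,
    sub_self]

lemma exists_real_smul_of_vecMulVec_star_sub_eq_smul_one [DecidableEq ι] [Nontrivial ι]
    {x y : ι → ℂ} {c : ℂ} (hx : x ≠ 0) (h : vecMulVec x (star y) - vecMulVec y (star x) = c • 1) :
    ∃ α : ℝ, y = (α : ℂ) • x := by
  have hoff {a b : ι} (hab : a ≠ b) : x a * star (y b) = y a * star (x b) := by
    simpa [vecMulVec, hab, sub_eq_zero] using congrFun (congrFun h a) b
  have hdiag (a : ι) : x a * star (y a) - y a * star (x a) = c := by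
    simpa [vecMulVec] using congrFun (congrFun h a) a
  obtain ⟨i, hxi⟩ := Function.ne_iff.mp hx
  obtain ⟨j, hji⟩ := exists_ne i
  set α := y i / x i
  have hyi : y i = α * x i := (div_mul_cancel₀ _ hxi).symm
  have hyk (k : ι) (hk : k ≠ i) : y k = star α * x k :=
    eq_star_div_mul_of_mul_star_eq hxi (hoff hk.symm)
  have hα : star α = α := by
    have hij := (hdiag i).trans (hdiag j).symm
    rw [mul_star_sub_mul_star_of_eq_mul hyi, mul_star_sub_mul_star_of_eq_mul (hyk j hji),
      star_star] at hij
    have hprod : (star α - α) * (Complex.normSq (x i) + Complex.normSq (x j)) = 0 := by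
      linear_combination hij
    have hpos : (Complex.normSq (x i) + Complex.normSq (x j) : ℂ) ≠ 0 := by
      exact_mod_cast (add_pos_of_pos_of_nonneg (Complex.normSq_pos.mpr hxi)
        (Complex.normSq_nonneg _)).ne'
    exact sub_eq_zero.mp ((mul_eq_zero.mp hprod).resolve_right hpos)
  refine ⟨α.re, funext fun k => ?_⟩
  rw [Complex.conj_eq_iff_re.mp hα, Pi.smul_apply, smul_eq_mul]
  rcases eq_or_ne k i with rfl | hk
  · exact hyi
  · rw [hyk k hk, hα]

end

/-- For nonzero `x ∈ ℂ³` and any `y ∈ ℂ³`, `F₀(x,y) = 0` holds if and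
only if `y = α • x` for some real `α`. In particular, if moreover `y ≠ 0` and
`F₀(x,y) = 0`, then `x` and `y` are linearly dependent over `ℝ`. -/
theorem F₀_eq_zero_iff_real_multiple (x y : Fin 3 → ℂ) (hx : x ≠ 0) :
    (F₀ x y = 0 ↔ ∃ α : ℝ, y = (α : ℂ) • x) ∧
      (y ≠ 0 → F₀ x y = 0 → ¬ LinearIndependent ℝ ![x, y]) := by
  have hiff : F₀ x y = 0 ↔ ∃ α : ℝ, y = (α : ℂ) • x := by
    refine ⟨fun h => exists_real_smul_of_vecMulVec_star_sub_eq_smul_one hx (sub_eq_zero.mp h), ?_⟩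
    rintro ⟨α, hy⟩
    simp [F₀, F_eq_vecMulVec_sub, vecMulVec_star_sub_eq_zero_of_eq_real_smul hy]
  refine ⟨hiff, fun _ h => ?_⟩
  obtain ⟨α, hy⟩ := hiff.mp h
  rw [LinearIndependent.pair_iff' hx, not_forall_not]
  exact ⟨α, hy.symm⟩
end
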